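/- Suppose 0 ≤ c(π,h) ≤ K for all π, h. If A is an α(p)-approximate algorithm for the minimum cost problem, i.e., for every prior p, C(p, A(p)) ≤ α(p)·min_π C(p,π) with α(p) ≥ 1, then for any true prior p0 and perturbed prior p1: C(p0, A(p1)) ≤ α(p1)·min_π C(p0,π) + (α(p1)+1)·K·‖p1−p0‖. -/

import Mathlib

/-!
Moving from `p1` to `p0` changes the expected cost of every policy by at most `K‖p1 - p0‖₁`.
So the policy `A p1` loses at most that much when evaluated under `p0`, and the optimum under
`p1` exceeds the optimum under `p0` by at most that much; the latter loss is scaled by `α p1`.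
-/

open Finset

theorem abs_sum_mul_sub_sum_mul_le {ι : Type*} (s : Finset ι) (p q c : ι → ℝ) {K : ℝ}
    (hc : ∀ i ∈ s, |c i| ≤ K) :
    |∑ i ∈ s, p i * c i - ∑ i ∈ s, q i * c i| ≤ K * ∑ i ∈ s, |p i - q i| := by
  rw [← sum_sub_distrib, mul_sum]
  refine (abs_sum_le_sum_abs _ _).trans (sum_le_sum fun i hi => ?_)
  rw [← sub_mul, abs_mul, mul_comm]
  exact mul_le_mul_of_nonneg_right (hc i hi) (abs_nonneg _)

theorem le_mul_inf'_add_of_abs_sub_le {ι : Type*} {s : Finset ι} (hs : s.Nonempty)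
    {f g : ι → ℝ} {α ε : ℝ} (hα : 0 ≤ α) (hfg : ∀ i ∈ s, |f i - g i| ≤ ε)
    {a : ι} (has : a ∈ s) (ha : g a ≤ α * s.inf' hs g) :
    f a ≤ α * s.inf' hs f + (α + 1) * ε := by
  obtain ⟨i, his, hi⟩ := exists_mem_eq_inf' hs f
  have hfa : f a ≤ g a + ε := by linarith [(abs_le.mp (hfg a has)).2]
  have hgi : s.inf' hs g ≤ f i + ε :=
    (inf'_le g his).trans (by linarith [(abs_le.mp (hfg i his)).1])
  calc f a ≤ α * (f i + ε) + ε := by nlinarith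
    _ = α * s.inf' hs f + (α + 1) * ε := by rw [hi]; ring

theorem stmt11_general {H P : Type*} [Fintype H] [Fintype P] [Nonempty P]
    (c : P → H → ℝ) (K : ℝ)
    (hc0 : ∀ π h, 0 ≤ c π h) (hcK : ∀ π h, c π h ≤ K)
    (α : (H → ℝ) → ℝ)
    (hα : ∀ p, 1 ≤ α p)
    (A : (H → ℝ) → P)
    (hA : ∀ (p : H → ℝ), (∀ h, 0 ≤ p h) → (∑ h, p h) = 1 →
      (∑ h, p h * c (A p) h) ≤
        α p * Finset.univ.inf' Finset.univ_nonempty (fun π => ∑ h, p h * c π h))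
    (p0 p1 : H → ℝ)
    (hp1 : ∀ h, 0 ≤ p1 h) (hp1sum : (∑ h, p1 h) = 1) :
    (∑ h, p0 h * c (A p1) h) ≤
      α p1 * Finset.univ.inf' Finset.univ_nonempty (fun π => ∑ h, p0 h * c π h)
      + (α p1 + 1) * K * ∑ h, |p1 h - p0 h| := by
  have hcost : ∀ π ∈ univ,
      |∑ h, p0 h * c π h - ∑ h, p1 h * c π h| ≤ K * ∑ h, |p1 h - p0 h| := by
    intro π _
    rw [abs_sub_comm]
    exact abs_sum_mul_sub_sum_mul_le _ _ _ _ fun h _ =>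
      (abs_of_nonneg (hc0 π h)).trans_le (hcK π h)
  rw [mul_assoc (α p1 + 1)]
  exact le_mul_inf'_add_of_abs_sub_le _ (zero_le_one.trans (hα p1)) hcost (mem_univ _)
    (hA p1 hp1 hp1sum)

theorem stmt11 {H P : Type*} [Fintype H] [Fintype P] [Nonempty P]
    (c : P → H → ℝ) (K : ℝ)
    (hc0 : ∀ π h, 0 ≤ c π h) (hcK : ∀ π h, c π h ≤ K)
    (α : (H → ℝ) → ℝ)
    (hα : ∀ p, 1 ≤ α p)
    (A : (H → ℝ) → P)
    (hA : ∀ (p : H → ℝ), (∀ h, 0 ≤ p h) → (∑ h, p h) = 1 →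
      (∑ h, p h * c (A p) h) ≤
        α p * Finset.univ.inf' Finset.univ_nonempty (fun π => ∑ h, p h * c π h))
    (p0 p1 : H → ℝ)
    (hp0 : ∀ h, 0 ≤ p0 h) (hp0sum : (∑ h, p0 h) = 1)
    (hp1 : ∀ h, 0 ≤ p1 h) (hp1sum : (∑ h, p1 h) = 1) :
    (∑ h, p0 h * c (A p1) h) ≤
      α p1 * Finset.univ.inf' Finset.univ_nonempty (fun π => ∑ h, p0 h * c π h)
      + (α p1 + 1) * K * ∑ h, |p1 h - p0 h| :=
  stmt11_general c K hc0 hcK α hα A hA p0 p1 hp1 hp1sum
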